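/- arXiv:2511.14541 — 4 statements merged into one kernel-verified Lean document; each statement's English description precedes it below -/
import Mathlib

section
/- Let A be a unital Banach algebra and suppose a₀, a₁ are invertible isometries that are joined by a continuous path t ↦ a_t (t ∈ [0,1]) of elements satisfying ‖a_t‖ ≤ 1 and a_t b_t a_t = a_t for some continuous path of elements b_t with ‖b_t‖ ≤ 1, b_t a_t b_t = b_t, b₀ = a₀⁻¹, b₁ = a₁⁻¹. Then a₀ and a₁ are joined by a continuous path within the group of invertible isometries of A. -/
/-!
The set of parameters `t` at which `b t` is a two-sided inverse of `a t` is closed by continuity,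
and it is open because it is the preimage of the open group of units: a unit `a` with `a * b * a = a`
has `b = a⁻¹`. It contains `0` because `a 0` is a unit, so by connectedness of `[0, 1]` it is
everything. An invertible `a` with `‖a‖ ≤ 1` and `‖a⁻¹‖ ≤ 1` is an isometry since
`1 = ‖a * a⁻¹‖ ≤ ‖a‖ ‖a⁻¹‖`, so the path `a` itself runs inside the invertible isometries.
-/

open unitInterval

/-- The set of invertible isometries of a unital Banach algebra, viewed inside `A`. -/
def InvertibleIsometries (A : Type*) [NormedRing A] : Set A :=
  {x | ∃ u : Aˣ, (u : A) = x ∧ ‖(u : A)‖ = 1 ∧ ‖((u⁻¹ : Aˣ) : A)‖ = 1}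

theorem IsUnit.mul_eq_one_and_of_mul_mul_self {M : Type*} [Monoid M] {a b : M} (ha : IsUnit a)
    (hab : a * b * a = a) : a * b = 1 ∧ b * a = 1 :=
  ⟨ha.mul_right_cancel (by rw [hab, one_mul]),
    ha.mul_left_cancel (by rw [← mul_assoc, hab, mul_one])⟩

theorem forall_mul_eq_one_of_mul_mul_self {X A : Type*} [TopologicalSpace X] [PreconnectedSpace X]
    [NormedRing A] [HasSummableGeomSeries A] {a b : X → A} (ha : Continuous a) (hb : Continuous b)
    (hab : ∀ x, a x * b x * a x = a x) {x₀ : X} (h₀ : IsUnit (a x₀)) (x : X) :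
    a x * b x = 1 ∧ b x * a x = 1 := by
  set S : Set X := {x | a x * b x = 1 ∧ b x * a x = 1}
  have hS_eq : S = a ⁻¹' {y | IsUnit y} := by
    ext x
    exact ⟨fun h => ⟨⟨a x, b x, h.1, h.2⟩, rfl⟩,
      fun h => IsUnit.mul_eq_one_and_of_mul_mul_self h (hab x)⟩
  have hS_closed : IsClosed S :=
    (isClosed_eq (ha.mul hb) continuous_const).inter (isClosed_eq (hb.mul ha) continuous_const)
  have hS_open : IsOpen S := hS_eq ▸ Units.isOpen.preimage ha
  have hS_univ : S = Set.univ :=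
    IsClopen.eq_univ ⟨hS_closed, hS_open⟩ ⟨x₀, h₀.mul_eq_one_and_of_mul_mul_self (hab x₀)⟩
  exact Set.eq_univ_iff_forall.mp hS_univ x

theorem norm_eq_one_of_mul_eq_one_of_norm_le_one {A : Type*} [NormedRing A] [NormOneClass A]
    {a b : A} (hab : a * b = 1) (ha : ‖a‖ ≤ 1) (hb : ‖b‖ ≤ 1) : ‖a‖ = 1 := by
  refine le_antisymm ha ?_
  calc (1 : ℝ) = ‖a * b‖ := by rw [hab, norm_one]
    _ ≤ ‖a‖ * ‖b‖ := norm_mul_le a b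
    _ ≤ ‖a‖ := mul_le_of_le_one_right (norm_nonneg a) hb

theorem mem_invertibleIsometries_of_mul_eq_one {A : Type*} [NormedRing A] [NormOneClass A]
    {a b : A} (hab : a * b = 1) (hba : b * a = 1) (ha : ‖a‖ ≤ 1) (hb : ‖b‖ ≤ 1) :
    a ∈ InvertibleIsometries A :=
  ⟨⟨a, b, hab, hba⟩, rfl, norm_eq_one_of_mul_eq_one_of_norm_le_one hab ha hb,
    norm_eq_one_of_mul_eq_one_of_norm_le_one hba hb ha⟩

theorem joinedIn_invertibleIsometries_of_MoorePenrose_path_general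
    (A : Type*) [NormedRing A] [NormOneClass A] [CompleteSpace A]
    (a b : I → A) (ha : Continuous a) (hb : Continuous b)
    (hnorm : ∀ t, ‖a t‖ ≤ 1 ∧ ‖b t‖ ≤ 1)
    (hmp : ∀ t, a t * b t * a t = a t ∧ b t * a t * b t = b t)
    (u₀ : Aˣ) (hu₀ : (u₀ : A) = a 0) :
    JoinedIn (InvertibleIsometries A) (a 0) (a 1) := by
  have hinv := forall_mul_eq_one_of_mul_mul_self ha hb (fun t => (hmp t).1) ⟨u₀, hu₀⟩
  refine ⟨⟨⟨a, ha⟩, rfl, rfl⟩, fun t => ?_⟩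
  exact mem_invertibleIsometries_of_mul_eq_one (hinv t).1 (hinv t).2 (hnorm t).1 (hnorm t).2

/-- If two invertible isometries `a 0` and `a 1` of a unital Banach algebra are joined
by a continuous path `t ↦ a t` of norm-at-most-one elements admitting a continuous path
of "Moore–Penrose inverses" `t ↦ b t` (with `a t * b t * a t = a t`,
`b t * a t * b t = b t`, `‖b t‖ ≤ 1`, and `b` inverting `a` at the endpoints), then
`a 0` and `a 1` are joined by a continuous path within the invertible isometries. -/
theorem joinedIn_invertibleIsometries_of_MoorePenrose_path
    (A : Type*) [NormedRing A] [NormOneClass A] [NormedAlgebra ℂ A] [CompleteSpace A]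
    (a b : I → A) (ha : Continuous a) (hb : Continuous b)
    (hnorm : ∀ t, ‖a t‖ ≤ 1 ∧ ‖b t‖ ≤ 1)
    (hmp : ∀ t, a t * b t * a t = a t ∧ b t * a t * b t = b t)
    (u₀ u₁ : Aˣ) (hu₀ : (u₀ : A) = a 0) (hu₁ : (u₁ : A) = a 1)
    (hb₀ : b 0 = ((u₀⁻¹ : Aˣ) : A)) (hb₁ : b 1 = ((u₁⁻¹ : Aˣ) : A))
    (hiso₀ : a 0 ∈ InvertibleIsometries A) (hiso₁ : a 1 ∈ InvertibleIsometries A) :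
    JoinedIn (InvertibleIsometries A) (a 0) (a 1) :=
  joinedIn_invertibleIsometries_of_MoorePenrose_path_general A a b ha hb hnorm hmp u₀ hu₀
end

section
/- Let X be a compact Hausdorff totally disconnected space. Then every continuous function f : X → 𝕋 (the circle group) is homotopic, within C(X, 𝕋), to the constant function 1; equivalently, C(X, 𝕋) is path-connected. -/
open Complex Set

/-- Key lemma: lifting through `Circle.exp`. -/
theorem exists_lift_of_totallyDisconnected
    (X : Type*) [TopologicalSpace X] [CompactSpace X] [T2Space X]
    [TotallyDisconnectedSpace X] (f : C(X, Circle)) :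
    ∃ F : C(X, ℝ), ∀ x, Circle.exp (F x) = f x := by
  classical
  -- clopen neighborhoods where f varies by < 1
  have hcov : ∀ x : X, ∃ U : Set X, IsClopen U ∧ x ∈ U ∧
      ∀ y ∈ U, ‖(f y : ℂ) - (f x : ℂ)‖ < 1 := by
    intro x
    have hopen : IsOpen {y : X | ‖(f y : ℂ) - (f x : ℂ)‖ < 1} := by
      have : Continuous fun y : X => ‖(f y : ℂ) - (f x : ℂ)‖ :=
        continuous_norm.comp (by fun_prop)
      exact isOpen_lt this continuous_const
    have hmem : x ∈ {y : X | ‖(f y : ℂ) - (f x : ℂ)‖ < 1} := by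
      simp
    obtain ⟨U, hU, hxU, hsub⟩ :=
      isTopologicalBasis_isClopen.exists_subset_of_mem_open hmem hopen
    exact ⟨U, hU, hxU, fun y hy => hsub hy⟩
  choose U hUclopen hUmem hUdist using hcov
  obtain ⟨t, ht⟩ := isCompact_univ.elim_finite_subcover U
    (fun x => (hUclopen x).2) (fun x _ => mem_iUnion.2 ⟨x, hUmem x⟩)
  set n := t.card with hn
  set c : Fin n → X := fun i => (t.equivFin.symm i : X) with hc
  have hex : ∀ y : X, ∃ m : ℕ, ∃ h : m < n, y ∈ U (c ⟨m, h⟩) := by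
    intro y
    obtain ⟨x, hx⟩ := mem_iUnion.1 (ht (mem_univ y))
    obtain ⟨hxt, hyU⟩ := mem_iUnion.1 hx
    refine ⟨(t.equivFin ⟨x, hxt⟩ : Fin n), (t.equivFin ⟨x, hxt⟩).2, ?_⟩
    simpa [hc] using hyU
  set ι : X → Fin n := fun y => ⟨Nat.find (hex y), (Nat.find_spec (hex y)).choose⟩ with hι
  have hmemι : ∀ y, y ∈ U (c (ι y)) := fun y => (Nat.find_spec (hex y)).choose_spec
  have hmin : ∀ y, ∀ j : Fin n, (j : ℕ) < (ι y : ℕ) → y ∉ U (c j) := by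
    intro y j hj hyj
    exact Nat.find_min (hex y) hj ⟨j.2, by simpa using hyj⟩
  -- local constancy of ι
  set W : X → Set X := fun y =>
    U (c (ι y)) \ ⋃ j : {j : Fin n // (j : ℕ) < (ι y : ℕ)}, U (c j) with hW
  have hWopen : ∀ y, IsOpen (W y) := by
    intro y
    exact ((hUclopen _).2).sdiff (isClosed_iUnion_of_finite fun j => (hUclopen _).1)
  have hWmem : ∀ y, y ∈ W y := by
    intro y
    refine ⟨hmemι y, ?_⟩
    simp only [mem_iUnion, not_exists]
    exact fun j => hmin y j j.2
  have hιconst : ∀ y z, z ∈ W y → ι z = ι y := by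
    intro y z hz
    obtain ⟨hz1, hz2⟩ := hz
    simp only [mem_iUnion, not_exists] at hz2
    apply Fin.ext
    apply le_antisymm
    · exact Nat.find_le ⟨(ι y).2, by simpa using hz1⟩
    · by_contra hlt
      push_neg at hlt
      exact hz2 ⟨ι z, hlt⟩ (hmemι z)
  -- definition of the lift
  set F : X → ℝ := fun y =>
    Complex.arg (f (c (ι y)) : ℂ) + Complex.arg ((f y / f (c (ι y)) : Circle) : ℂ) with hF
  have hdistι : ∀ y, ‖(f y : ℂ) - (f (c (ι y)) : ℂ)‖ < 1 :=
    fun y => hUdist _ _ (hmemι y)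
  have hFcont : Continuous F := by
    rw [continuous_iff_continuousAt]
    intro y₀
    set i := ι y₀ with hi
    have hq : ∀ z : X, ((f z / f (c i) : Circle) : ℂ) = (f z : ℂ) / (f (c i) : ℂ) := by
      intro z; simp
    -- the reference function
    set G : X → ℝ := fun z =>
      Complex.arg (f (c i) : ℂ) + Complex.arg ((f z : ℂ) / (f (c i) : ℂ)) with hG
    have hslit : ∀ z ∈ U (c i), (f z : ℂ) / (f (c i) : ℂ) ∈ Complex.slitPlane := by
      intro z hz
      left
      have habs : ‖(f z : ℂ) / (f (c i) : ℂ) - 1‖ < 1 := by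
        have h1 : ‖(f z : ℂ) - (f (c i) : ℂ)‖ < 1 := hUdist _ _ hz
        have h2 : (f (c i) : ℂ) ≠ 0 := Circle.coe_ne_zero _
        rw [div_sub_one h2, norm_div, Circle.norm_coe, div_one]
        exact h1
      have := Complex.re_le_norm (1 - (f z : ℂ) / (f (c i) : ℂ))
      have habs' : ‖1 - (f z : ℂ) / (f (c i) : ℂ)‖ < 1 := by
        rwa [← norm_neg, neg_sub]
      simp only [Complex.sub_re, Complex.one_re] at this
      linarith
    have hGcont : ContinuousAt G y₀ := by
      apply ContinuousAt.add continuousAt_const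
      have h1 : ContinuousAt (fun z : X => (f z : ℂ) / (f (c i) : ℂ)) y₀ := by fun_prop
      exact ContinuousAt.comp (g := Complex.arg)
        (f := fun z : X => (f z : ℂ) / (f (c i) : ℂ)) (x := y₀)
        (Complex.continuousAt_arg (hslit y₀ (hmemι y₀))) h1
    apply hGcont.congr
    apply Filter.eventuallyEq_of_mem ((hWopen y₀).mem_nhds (hWmem y₀))
    intro z hz
    simp only [hF, hG, hιconst y₀ z hz, hq]
    rw [← hi, hq]
  refine ⟨⟨F, hFcont⟩, fun y => ?_⟩
  simp only [ContinuousMap.coe_mk, hF]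
  rw [Circle.exp_add, Circle.exp_arg, Circle.exp_arg, mul_div_cancel]

/-- If `X` is a compact Hausdorff totally disconnected space, then every continuous
function `f : X → 𝕋` is homotopic within `C(X, 𝕋)` to the constant function `1`;
equivalently, `C(X, 𝕋)` is path-connected. -/
theorem circleValued_joined_one_of_totallyDisconnected
    (X : Type*) [TopologicalSpace X] [CompactSpace X] [T2Space X]
    [TotallyDisconnectedSpace X] :
    (∀ f : C(X, Circle), Joined f (ContinuousMap.const X 1)) ∧
    PathConnectedSpace C(X, Circle) := by
  have key : ∀ f : C(X, Circle), Joined f (ContinuousMap.const X 1) := by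
    intro f
    obtain ⟨F, hF⟩ := exists_lift_of_totallyDisconnected X f
    set Φ : C(unitInterval × X, Circle) :=
      ⟨fun p => Circle.exp ((1 - (p.1 : ℝ)) * F p.2), by fun_prop⟩ with hΦ
    refine ⟨⟨⟨fun t => Φ.curry t, Φ.curry.continuous⟩, ?_, ?_⟩⟩
    · ext x
      simp [hΦ, hF x]
    · ext x
      simp [hΦ]
  refine ⟨key, ⟨⟨ContinuousMap.const X 1⟩, fun f g => (key f).trans (key g).symm⟩⟩
end

section
/- Let G be an étale groupoid and let A, B be compact open bisections of G. Then A ⊆ B if and only if A = B·A⁻¹·A, where the products are set products of bisections. -/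
/-- An étale topological groupoid structure on a space `Γ`: source/range maps,
a (partially meaningful, totally defined) multiplication, and inversion, such that
the algebraic groupoid axioms hold for composable elements, inversion and
multiplication are continuous, and the source and range maps are local
homeomorphisms. -/
class EtaleGroupoid (Γ : Type*) [TopologicalSpace Γ] where
  src : Γ → Γ
  rng : Γ → Γ
  mul : Γ → Γ → Γ
  inv : Γ → Γ
  src_src : ∀ x, src (src x) = src x
  rng_src : ∀ x, rng (src x) = src x
  src_rng : ∀ x, src (rng x) = rng x
  rng_rng : ∀ x, rng (rng x) = rng x
  rng_mul : ∀ a b, src a = rng b → rng (mul a b) = rng a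
  src_mul : ∀ a b, src a = rng b → src (mul a b) = src b
  mul_assoc : ∀ a b c, src a = rng b → src b = rng c →
      mul (mul a b) c = mul a (mul b c)
  unit_mul : ∀ a, mul (rng a) a = a
  mul_unit : ∀ a, mul a (src a) = a
  src_inv : ∀ a, src (inv a) = rng a
  rng_inv : ∀ a, rng (inv a) = src a
  inv_inv : ∀ a, inv (inv a) = a
  mul_inv : ∀ a, mul a (inv a) = rng a
  inv_mul : ∀ a, mul (inv a) a = src a
  continuous_inv : Continuous inv
  continuous_mul :
      Continuous (fun p : {p : Γ × Γ // src p.1 = rng p.2} => mul p.1.1 p.1.2)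
  isLocalHomeomorph_src : IsLocalHomeomorph src
  isLocalHomeomorph_rng : IsLocalHomeomorph rng

namespace EtaleGroupoid

variable (Γ : Type*) [TopologicalSpace Γ] [EtaleGroupoid Γ]

/-- The unit space `Γ⁽⁰⁾` of the groupoid. -/
def unitSpace : Set Γ := {x | src x = x}

variable {Γ}

/-- The set product of two subsets of the groupoid. -/
def setMul (A B : Set Γ) : Set Γ :=
  {c | ∃ a ∈ A, ∃ b ∈ B, src a = rng b ∧ c = mul a b}

/-- The set inverse of a subset of the groupoid. -/
def setInv (A : Set Γ) : Set Γ := inv '' A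

/-- A bisection: a subset on which both the source and the range maps are injective. -/
def IsBisection (B : Set Γ) : Prop := Set.InjOn src B ∧ Set.InjOn rng B

/-- A full bisection: a bisection whose source and range are the whole unit space. -/
def IsFullBisection (B : Set Γ) : Prop :=
  IsBisection B ∧ src '' B = unitSpace Γ ∧ rng '' B = unitSpace Γ

lemma src_mem_unitSpace (x : Γ) : src x ∈ unitSpace Γ := src_src x

lemma rng_mem_unitSpace (x : Γ) : rng x ∈ unitSpace Γ := src_rng x

lemma src_mul_inv_of_src_eq {a b : Γ} (h : src b = src a) : src (mul b (inv a)) = rng a := by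
  rw [src_mul b (inv a) (by rw [rng_inv, h]), src_inv]

lemma mul_inv_mul_cancel_of_src_eq {a b : Γ} (h : src b = src a) :
    mul (mul b (inv a)) a = b := by
  rw [EtaleGroupoid.mul_assoc b (inv a) a (by rw [rng_inv, h]) (src_inv a),
    EtaleGroupoid.inv_mul, ← h, mul_unit]

lemma setMul_setMul_setInv_eq {A : Set Γ} (hA : Set.InjOn rng A) (B : Set Γ) :
    setMul (setMul B (setInv A)) A = src ⁻¹' (src '' A) ∩ B := by
  ext c
  constructor
  · rintro ⟨_, ⟨b, hb, _, ⟨a₁, ha₁, rfl⟩, hba₁, rfl⟩, a₂, ha₂, hcomp, rfl⟩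
    rw [rng_inv] at hba₁
    rw [src_mul_inv_of_src_eq hba₁] at hcomp
    -- the two factors taken from `A` have the same range, hence coincide
    obtain rfl := hA ha₁ ha₂ hcomp
    rw [mul_inv_mul_cancel_of_src_eq hba₁]
    exact ⟨⟨a₁, ha₁, hba₁.symm⟩, hb⟩
  · rintro ⟨⟨a, ha, hac⟩, hc⟩
    exact ⟨mul c (inv a), ⟨c, hc, inv a, ⟨a, ha, rfl⟩, by rw [rng_inv, hac], rfl⟩,
      a, ha, src_mul_inv_of_src_eq hac.symm, (mul_inv_mul_cancel_of_src_eq hac.symm).symm⟩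

end EtaleGroupoid

open EtaleGroupoid

theorem subset_iff_eq_setMul_general
    (Γ : Type*) [TopologicalSpace Γ] [EtaleGroupoid Γ]
    (A B : Set Γ)
    (hA : IsBisection A)
    (hB : IsBisection B) :
    A ⊆ B ↔ A = setMul (setMul B (setInv A)) A := by
  rw [setMul_setMul_setInv_eq hA.2]
  exact ⟨fun hAB => (hB.1.preimage_image_inter hAB).symm,
    fun hA_eq => hA_eq.subset.trans Set.inter_subset_right⟩

/-- For compact open bisections `A, B` of an étale groupoid, `A ⊆ B` if and only if
`A = B·A⁻¹·A`, where products are set products of bisections. -/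
theorem subset_iff_eq_setMul
    (Γ : Type*) [TopologicalSpace Γ] [EtaleGroupoid Γ]
    (A B : Set Γ)
    (hAo : IsOpen A) (hAc : IsCompact A) (hA : IsBisection A)
    (hBo : IsOpen B) (hBc : IsCompact B) (hB : IsBisection B) :
    A ⊆ B ↔ A = setMul (setMul B (setInv A)) A :=
  subset_iff_eq_setMul_general Γ A B hA hB
end

section
/- Let G be an effective étale groupoid with compact unit space, and let B be a full open bisection such that B·x = x·B (as sets) for every x ∈ G; in particular B·u = u·B for every unit u. Then B = G⁽⁰⁾. -/
open EtaleGroupoid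

/-- In an effective étale groupoid with compact unit space, a full open bisection
`B` commuting with every element of the groupoid (`B·x = x·B` as sets for every
`x`) must equal the unit space. -/
theorem fullBisection_central_eq_unitSpace
    (Γ : Type*) [TopologicalSpace Γ] [EtaleGroupoid Γ]
    (hcpt : IsCompact (unitSpace Γ))
    (heff : interior {x : Γ | src x = rng x} = unitSpace Γ)
    (B : Set Γ) (hBo : IsOpen B) (hBf : IsFullBisection B)
    (hcomm : ∀ x : Γ, setMul B {x} = setMul {x} B) :
    B = unitSpace Γ := by
  -- Step 1: every element of B is an isotropy element.
  have hiso : B ⊆ {x : Γ | src x = rng x} := by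
    intro b hb
    have h1 : b ∈ setMul B {src b} := by
      refine ⟨b, hb, src b, rfl, ?_, ?_⟩
      · rw [rng_src]
      · rw [mul_unit]
    rw [hcomm (src b)] at h1
    obtain ⟨u, hu, b', hb', hcomp, heq⟩ := h1
    rw [Set.mem_singleton_iff] at hu
    subst hu
    rw [src_src] at hcomp
    have : b = b' := by rw [heq, hcomp, unit_mul]
    subst this
    exact hcomp
  -- Step 2: B ⊆ unitSpace by effectiveness and openness.
  have hsub : B ⊆ unitSpace Γ := by
    rw [← heff]
    exact fun b hb => mem_interior.mpr ⟨B, hiso, hBo, hb⟩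
  -- Step 3: unitSpace ⊆ B by fullness.
  apply Set.Subset.antisymm hsub
  intro u hu
  rw [← hBf.2.1] at hu
  obtain ⟨b, hb, rfl⟩ := hu
  have : src b = b := hsub hb
  rwa [this]
end
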